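/- arXiv:1003.1525 — 2 statements merged into one kernel-verified Lean document; each statement's English description precedes it below -/
import Mathlib

section
/- Suppose for each j ≥ 0, the pair (u_{j+1}, r_{j+1}) minimizes ‖u‖_B + λ_{j+1}∫Φ(|r_j − Tu|) subject to Tu + r = r_j, with r_0 = f. Then for every k, the telescoping energy bound holds: Σ_{j=1}^{k} (1/λ_j)‖u_j‖_B + ∫Φ(|r_k|) ≤ ∫Φ(|f|). -/
open MeasureTheory Finset

/-- Telescoping energy bound for the hierarchical decomposition: if each pair
`(u_{j+1}, r_{j+1})` minimizes `‖u‖_B + λ_{j+1} ∫ Φ(|r_j − Tu|)` (with `r_0 = f` and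
`r_{j+1} = r_j − T u_{j+1}`), then for every `k`,
`Σ_{j=1}^k (1/λ_j) ‖u_j‖_B + ∫ Φ(|r_k|) ≤ ∫ Φ(|f|)`. -/
theorem stmt_4
    {B Ω : Type*} [NormedAddCommGroup B] [NormedSpace ℝ B]
    [MeasurableSpace Ω] (μ : Measure Ω)
    (T : B →ₗ[ℝ] Ω → ℝ)
    (Φ : ℝ → ℝ) (hΦconv : ConvexOn ℝ (Set.Ici 0) Φ)
    (hΦ0 : Φ 0 = 0) (hΦpos : ∀ t > (0:ℝ), 0 < Φ t)
    (f : Ω → ℝ) (lam : ℕ → ℝ) (hlam : ∀ j, 0 < lam j) (hmono : StrictMono lam)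
    (u : ℕ → B) (r : ℕ → Ω → ℝ)
    (hr0 : r 0 = f)
    (hrec : ∀ j, r (j + 1) = fun x => r j x - T (u (j + 1)) x)
    (hmin : ∀ j, ∀ v : B,
      ‖u (j + 1)‖ + lam (j + 1) * ∫ x, Φ |r (j + 1) x| ∂μ
        ≤ ‖v‖ + lam (j + 1) * ∫ x, Φ |r j x - T v x| ∂μ) :
    ∀ k : ℕ, ∑ j ∈ range k, (1 / lam (j + 1)) * ‖u (j + 1)‖ + ∫ x, Φ |r k x| ∂μ
        ≤ ∫ x, Φ |f x| ∂μ := by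
  intro k
  induction k with
  | zero => simp [hr0]
  | succ k ih =>
    have hstep := hmin k 0
    have hT0 : T (0 : B) = 0 := map_zero T
    simp only [hT0, norm_zero, Pi.zero_apply, sub_zero, zero_add] at hstep
    have hlk := hlam (k + 1)
    have hdiv : (1 / lam (k + 1)) * ‖u (k + 1)‖ + ∫ x, Φ |r (k + 1) x| ∂μ
        ≤ ∫ x, Φ |r k x| ∂μ := by
      rw [div_mul_eq_mul_div, one_mul, ← sub_nonneg]
      have : (∫ x, Φ |r k x| ∂μ + -(‖u (k + 1)‖ / lam (k + 1) + ∫ x, Φ |r (k + 1) x| ∂μ))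
          * lam (k + 1) = lam (k + 1) * ∫ x, Φ |r k x| ∂μ
            - (‖u (k + 1)‖ + lam (k + 1) * ∫ x, Φ |r (k + 1) x| ∂μ) := by
        field_simp; ring
      nlinarith [mul_pos hlk hlk]
    rw [Finset.sum_range_succ]
    linarith
end

section
/- Let u_{j+1} minimize ‖u‖_B + λ_{j+1}‖r_j − Tu‖_{L^p}^p recursively with r_0 = f ∈ L^p_#, λ_{j+1} = λ₁·2^{(p−1)j} and λ₁ = β/‖f‖_{L^p}^{p−1}, under the apriori dual estimate ‖r_j‖_{L^p}^{p−1} ≤ (β/p)·‖T*φ(r_j)‖_{B*} = β/(p λ_j). Then the partial sums x_k = Σ_{j=1}^k u_j form a Cauchy sequence in B with limit x satisfying ‖x‖_B ≤ (β 2^p / p)·‖f‖_{L^p}. -/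
/-!
Testing the minimization of `u_{j+1}` against `v = 0` gives
`‖u_{j+1}‖ + λ_{j+1}‖r_{j+1}‖^p ≤ λ_{j+1}‖r_j‖^p`. Since `λ_{j+2} = 2^{p-1} λ_{j+1}`, these
inequalities telescope: `∑ ‖u_j‖ ≤ λ₁‖f‖^p + (2^{p-1} - 1) ∑_{j ≥ 1} λ_j‖r_j‖^p`, with
`λ₁‖f‖^p = β‖f‖`. The dual estimate bounds `λ_j‖r_j‖^p ≤ (β/p)‖r_j‖` and, solved for `‖r_j‖`,
gives `‖r_j‖ ≤ p^{-1/(p-1)} 2^{1-j} ‖f‖`. Hence `∑ ‖u_j‖ ≤ (β‖f‖/p)(p + (2^p - 2) p^{-1/(p-1)})`,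
which is at most `β 2^p ‖f‖ / p` because `p^{-1/(p-1)} ≤ p/(p+1)` and `p² - p ≤ 2^p`.
Absolute convergence then gives the Cauchy property and the bound on the limit.
-/

open MeasureTheory Finset Filter

theorem sq_sub_self_le_two_rpow {p : ℝ} (hp : 1 ≤ p) : p ^ 2 - p ≤ (2 : ℝ) ^ p := by
  rcases le_total p 2 with hp2 | hp2
  · have : (2 : ℝ) ≤ 2 ^ p := by
      simpa using Real.rpow_le_rpow_of_exponent_le (by norm_num : (1 : ℝ) ≤ 2) hp
    nlinarith
  · -- `2 ^ p = 4 exp x` with `x = (p - 2) log 2`, and `exp x` dominates its Taylor cubic.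
    set x := (p - 2) * Real.log 2 with hx
    have hx_lower : (p - 2) * 0.6931471803 ≤ x :=
      mul_le_mul_of_nonneg_left Real.log_two_gt_d9.le (by linarith)
    have hx0 : 0 ≤ x := le_trans (by nlinarith) hx_lower
    have htaylor : 1 + x + x ^ 2 / 2 + x ^ 3 / 6 ≤ Real.exp x := by
      have h := Real.sum_le_exp_of_nonneg hx0 4
      simp only [sum_range_succ, sum_range_zero, Nat.factorial] at h
      norm_num at h
      linarith
    have hpow : (2 : ℝ) ^ p = 4 * Real.exp x := by
      rw [hx, mul_comm (p - 2), ← Real.rpow_def_of_pos two_pos,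
        show (4 : ℝ) = 2 ^ (2 : ℝ) by norm_num, ← Real.rpow_add two_pos]
      ring_nf
    nlinarith [mul_le_mul hx_lower hx_lower (by nlinarith) hx0,
      mul_nonneg (mul_nonneg hx0 hx0) hx0, sq_nonneg (x - 2)]

theorem rpow_neg_inv_sub_one_le {p : ℝ} (hp : 1 < p) : p ^ (-(p - 1)⁻¹) ≤ p / (p + 1) := by
  have hp0 : 0 < p := by linarith
  have hlog : p⁻¹ ≤ Real.log p * (p - 1)⁻¹ := by
    rw [le_mul_inv_iff₀ (by linarith)]
    have := Real.one_sub_inv_le_log_of_pos hp0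
    have : p⁻¹ * (p - 1) = 1 - p⁻¹ := by field_simp
    linarith
  calc p ^ (-(p - 1)⁻¹) = (Real.exp (Real.log p * (p - 1)⁻¹))⁻¹ := by
        rw [Real.rpow_def_of_pos hp0, mul_neg, Real.exp_neg]
    _ ≤ (Real.exp p⁻¹)⁻¹ := by gcongr
    _ ≤ (p⁻¹ + 1)⁻¹ := by gcongr; exact Real.add_one_le_exp _
    _ = p / (p + 1) := by field_simp; ring

theorem add_two_rpow_sub_two_mul_le {p : ℝ} (hp : 1 < p) :
    p + (2 ^ p - 2) * p ^ (-(p - 1)⁻¹) ≤ (2 : ℝ) ^ p := by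
  have hp0 : 0 < p := by linarith
  have h2p : (2 : ℝ) ≤ 2 ^ p := by
    simpa using Real.rpow_le_rpow_of_exponent_le (by norm_num : (1 : ℝ) ≤ 2) hp.le
  calc p + (2 ^ p - 2) * p ^ (-(p - 1)⁻¹) ≤ p + (2 ^ p - 2) * (p / (p + 1)) := by
        gcongr
        exact rpow_neg_inv_sub_one_le hp
    _ ≤ 2 ^ p := by
        rw [← sub_nonneg]
        have : 2 ^ p - (p + (2 ^ p - 2) * (p / (p + 1))) = (2 ^ p - (p ^ 2 - p)) / (p + 1) := by
          field_simp; ring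
        rw [this]
        exact div_nonneg (by linarith [sq_sub_self_le_two_rpow hp.le]) (by linarith)

theorem sum_range_le_of_energy_descent {a E : ℕ → ℝ} {E₀ q c : ℝ}
    (ha : ∀ j, 0 ≤ a j) (hE : ∀ j, 0 ≤ E j) (hq : 1 ≤ q)
    (h_first : a 0 + E 0 ≤ E₀) (h_step : ∀ j, a (j + 1) + E (j + 1) ≤ q * E j)
    (hE_geom : ∀ j, E j ≤ c * (1 / 2) ^ j) (k : ℕ) :
    ∑ j ∈ range k, a j ≤ E₀ + 2 * (q - 1) * c := by
  have htelescope : ∀ n, ∑ j ∈ range (n + 1), a j + E n ≤ E₀ + (q - 1) * ∑ j ∈ range n, E j := by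
    intro n
    induction n with
    | zero => simpa using h_first
    | succ n ih =>
      rw [sum_range_succ _ (n + 1), sum_range_succ E n, mul_add]
      linarith [h_step n]
  have hgeom : ∑ j ∈ range k, E j ≤ 2 * c :=
    calc ∑ j ∈ range k, E j ≤ ∑ j ∈ range k, c * (1 / 2) ^ j := sum_le_sum fun j _ => hE_geom j
      _ = c * ∑ j ∈ range k, (1 / 2 : ℝ) ^ j := (mul_sum ..).symm
      _ ≤ c * 2 := by
        gcongr
        · linarith [hE 0, hE_geom 0]
        · exact sum_geometric_two_le k
      _ = 2 * c := mul_comm ..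
  calc ∑ j ∈ range k, a j ≤ ∑ j ∈ range (k + 1), a j + E k := by
        rw [sum_range_succ]; linarith [ha k, hE k]
    _ ≤ E₀ + (q - 1) * ∑ j ∈ range k, E j := htelescope k
    _ ≤ E₀ + 2 * (q - 1) * c := by nlinarith

theorem cauchySeq_sum_range_of_sum_norm_le {E : Type*} [SeminormedAddCommGroup E] {v : ℕ → E}
    {M : ℝ} (h : ∀ k, ∑ j ∈ range k, ‖v j‖ ≤ M) : CauchySeq fun k => ∑ j ∈ range k, v j :=
  cauchySeq_range_of_norm_bounded
    (summable_of_sum_range_le (fun _ => norm_nonneg _) h).hasSum.tendsto_sum_nat.cauchySeq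
    fun _ => le_rfl

theorem norm_le_of_tendsto_sum_range {E : Type*} [SeminormedAddCommGroup E] {v : ℕ → E}
    {M : ℝ} (h : ∀ k, ∑ j ∈ range k, ‖v j‖ ≤ M) {x : E}
    (hx : Tendsto (fun k => ∑ j ∈ range k, v j) atTop (nhds x)) : ‖x‖ ≤ M :=
  le_of_tendsto' hx.norm fun k => (norm_sum_le _ _).trans (h k)

theorem mul_rpow_le_of_rpow_sub_one_le {p x l β : ℝ} (hp : 0 < p) (hx : 0 ≤ x) (hl : 0 < l)
    (h : x ^ (p - 1) ≤ β / (p * l)) : l * x ^ p ≤ β / p * x :=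
  calc l * x ^ p = l * x ^ (p - 1) * x := by
        rw [mul_assoc, ← Real.rpow_add_one' hx (by linarith), sub_add_cancel]
    _ ≤ l * (β / (p * l)) * x := by gcongr
    _ = β / p * x := by field_simp

-- `hierarchicalScale β ‖f‖ p j` is the paper's `λ_{j+1}`: the index is shifted by one.
noncomputable def hierarchicalScale (β F p : ℝ) (j : ℕ) : ℝ := β / F ^ (p - 1) * 2 ^ ((p - 1) * j)

section hierarchicalScale

variable {β F p : ℝ}

theorem hierarchicalScale_pos (hβ : 0 < β) (hF : 0 < F) (j : ℕ) :
    0 < hierarchicalScale β F p j := by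
  unfold hierarchicalScale; positivity

theorem hierarchicalScale_succ (j : ℕ) :
    hierarchicalScale β F p (j + 1) = 2 ^ (p - 1) * hierarchicalScale β F p j := by
  simp only [hierarchicalScale, Nat.cast_succ, mul_add_one, Real.rpow_add two_pos]
  ring

theorem hierarchicalScale_zero_mul_rpow (hF : 0 < F) :
    hierarchicalScale β F p 0 * F ^ p = β * F := by
  rw [hierarchicalScale, Nat.cast_zero, mul_zero, Real.rpow_zero, mul_one,
    Real.rpow_sub_one hF.ne']
  field_simp

theorem div_mul_hierarchicalScale (hp : 1 < p) (hβ : β ≠ 0) (hF : 0 < F) (j : ℕ) :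
    β / (p * hierarchicalScale β F p j) = (F * p ^ (-(p - 1)⁻¹) * (1 / 2) ^ j) ^ (p - 1) := by
  have hp0 : 0 < p := by linarith
  have ht : (p ^ (-(p - 1)⁻¹)) ^ (p - 1) = p⁻¹ := by
    rw [← Real.rpow_mul hp0.le, neg_mul, inv_mul_cancel₀ (by linarith), Real.rpow_neg_one]
  have hgeom : (((1 : ℝ) / 2) ^ j) ^ (p - 1) = (2 ^ ((p - 1) * j))⁻¹ := by
    rw [one_div, inv_pow, Real.inv_rpow (by positivity), ← Real.rpow_natCast_mul two_pos.le,
      mul_comm]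
  rw [Real.mul_rpow (by positivity) (by positivity), Real.mul_rpow hF.le (by positivity), ht,
    hgeom, hierarchicalScale]
  field_simp

theorem hierarchicalScale_mul_rpow_le {N : ℕ → ℝ} (hp : 1 < p) (hβ : 0 < β) (hF : 0 < F)
    (hN : ∀ j, 0 ≤ N j) (hdual : ∀ j, N (j + 1) ^ (p - 1) ≤ β / (p * hierarchicalScale β F p j))
    (j : ℕ) :
    hierarchicalScale β F p j * N (j + 1) ^ p
      ≤ β / p * F * p ^ (-(p - 1)⁻¹) * (1 / 2) ^ j := by
  have hresidual : N (j + 1) ≤ F * p ^ (-(p - 1)⁻¹) * (1 / 2) ^ j := by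
    have h := hdual j
    rw [div_mul_hierarchicalScale hp hβ.ne' hF] at h
    exact (Real.rpow_le_rpow_iff (hN _) (by positivity) (by linarith)).mp h
  calc hierarchicalScale β F p j * N (j + 1) ^ p ≤ β / p * N (j + 1) :=
        mul_rpow_le_of_rpow_sub_one_le (by linarith) (hN _) (hierarchicalScale_pos hβ hF j)
          (hdual j)
    _ ≤ β / p * (F * p ^ (-(p - 1)⁻¹) * (1 / 2) ^ j) := by gcongr
    _ = β / p * F * p ^ (-(p - 1)⁻¹) * (1 / 2) ^ j := by ring

theorem sum_range_le_of_descent_of_dual {a N : ℕ → ℝ} (hp : 1 < p) (hβ : 0 < β) (hF : 0 < F)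
    (ha : ∀ j, 0 ≤ a j) (hN : ∀ j, 0 ≤ N j) (hN0 : N 0 = F)
    (hdescent : ∀ j, a j + hierarchicalScale β F p j * N (j + 1) ^ p
      ≤ hierarchicalScale β F p j * N j ^ p)
    (hdual : ∀ j, N (j + 1) ^ (p - 1) ≤ β / (p * hierarchicalScale β F p j)) (k : ℕ) :
    ∑ j ∈ range k, a j ≤ β * 2 ^ p / p * F := by
  set t := p ^ (-(p - 1)⁻¹)
  refine (sum_range_le_of_energy_descent (E₀ := β * F) ha
    (fun j => mul_nonneg (hierarchicalScale_pos hβ hF j).le (Real.rpow_nonneg (hN _) p))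
    (Real.one_le_rpow one_le_two (by linarith : 0 ≤ p - 1)) ?_ ?_
    (hierarchicalScale_mul_rpow_le hp hβ hF hN hdual) k).trans ?_
  · simpa only [hN0, hierarchicalScale_zero_mul_rpow hF] using hdescent 0
  · intro j
    calc _ ≤ hierarchicalScale β F p (j + 1) * N (j + 1) ^ p := hdescent (j + 1)
      _ = _ := by rw [hierarchicalScale_succ, mul_assoc]
  · have h2p : (2 : ℝ) ^ p = 2 * 2 ^ (p - 1) := by
      rw [← Real.rpow_one_add' zero_le_two (by linarith), add_sub_cancel]
    calc β * F + 2 * (2 ^ (p - 1) - 1) * (β / p * F * t)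
        = β * F / p * (p + (2 ^ p - 2) * t) := by rw [h2p]; field_simp
      _ ≤ β * F / p * 2 ^ p := by gcongr; exact add_two_rpow_sub_two_mul_le hp
      _ = β * 2 ^ p / p * F := by ring

end hierarchicalScale

theorem stmt_7_general
    {B Ω : Type*} [NormedAddCommGroup B] [NormedSpace ℝ B]
    [MeasurableSpace Ω] (μ : Measure Ω)
    (p : ℝ) (hp : 1 < p) (β : ℝ) (hβ : 0 < β)
    (T : B →ₗ[ℝ] Ω → ℝ)
    (f : Ω → ℝ)
    (hfne : (eLpNorm f (ENNReal.ofReal p) μ).toReal ≠ 0)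
    (lam : ℕ → ℝ)
    (hlam : ∀ j : ℕ, lam (j + 1)
      = (β / (eLpNorm f (ENNReal.ofReal p) μ).toReal ^ (p - 1)) * 2 ^ ((p - 1) * j))
    (u : ℕ → B) (r : ℕ → Ω → ℝ)
    (hr0 : r 0 = f)
    (hmin : ∀ j, ∀ v : B,
      ‖u (j + 1)‖ + lam (j + 1) * (eLpNorm (r (j + 1)) (ENNReal.ofReal p) μ).toReal ^ p
        ≤ ‖v‖ + lam (j + 1)
            * (eLpNorm (fun x => r j x - T v x) (ENNReal.ofReal p) μ).toReal ^ p)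
    (hdual : ∀ j : ℕ, 1 ≤ j →
      (eLpNorm (r j) (ENNReal.ofReal p) μ).toReal ^ (p - 1) ≤ β / (p * lam j)) :
    CauchySeq (fun k => ∑ j ∈ range k, u (j + 1)) ∧
    ∀ x : B, Tendsto (fun k => ∑ j ∈ range k, u (j + 1)) atTop (nhds x) →
      ‖x‖ ≤ (β * 2 ^ p / p) * (eLpNorm f (ENNReal.ofReal p) μ).toReal := by
  set F := (eLpNorm f (ENNReal.ofReal p) μ).toReal
  set N : ℕ → ℝ := fun j => (eLpNorm (r j) (ENNReal.ofReal p) μ).toReal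
  have hF : 0 < F := lt_of_le_of_ne ENNReal.toReal_nonneg (Ne.symm hfne)
  have hscale : ∀ j, lam (j + 1) = hierarchicalScale β F p j := hlam
  have hdescent : ∀ j, ‖u (j + 1)‖ + hierarchicalScale β F p j * N (j + 1) ^ p
      ≤ hierarchicalScale β F p j * N j ^ p := fun j => by
    rw [← hscale j]; simpa using hmin j 0
  have hsum : ∀ k, ∑ j ∈ range k, ‖u (j + 1)‖ ≤ β * 2 ^ p / p * F :=
    sum_range_le_of_descent_of_dual (a := fun j => ‖u (j + 1)‖) (N := N) hp hβ hF
      (fun _ => norm_nonneg _) (fun _ => ENNReal.toReal_nonneg) (by simp only [N, hr0, F]) hdescent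
      (fun j => by rw [← hscale j]; exact hdual (j + 1) (Nat.le_add_left 1 j))
  exact ⟨cauchySeq_sum_range_of_sum_norm_le hsum,
    fun _ hx => norm_le_of_tendsto_sum_range hsum hx⟩

/-- Convergence of the hierarchical partial sums in `B` with the precise bound
`‖x‖_B ≤ (β 2^p / p) ‖f‖_{L^p}`, for scales `λ_{j+1} = λ₁ 2^{(p−1)j}`,
`λ₁ = β/‖f‖_{L^p}^{p−1}`, under the apriori dual estimate
`‖r_j‖_{L^p}^{p−1} ≤ β/(p λ_j)` for `j ≥ 1`. -/
theorem stmt_7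
    {B Ω : Type*} [NormedAddCommGroup B] [NormedSpace ℝ B] [CompleteSpace B]
    [MeasurableSpace Ω] (μ : Measure Ω)
    (p : ℝ) (hp : 1 < p) (β : ℝ) (hβ : 0 < β)
    (T : B →ₗ[ℝ] Ω → ℝ)
    (f : Ω → ℝ) (hf : MemLp f (ENNReal.ofReal p) μ)
    (hfne : (eLpNorm f (ENNReal.ofReal p) μ).toReal ≠ 0)
    (lam : ℕ → ℝ)
    (hlam : ∀ j : ℕ, lam (j + 1)
      = (β / (eLpNorm f (ENNReal.ofReal p) μ).toReal ^ (p - 1)) * 2 ^ ((p - 1) * j))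
    (u : ℕ → B) (r : ℕ → Ω → ℝ)
    (hr0 : r 0 = f)
    (hrec : ∀ j, r (j + 1) = fun x => r j x - T (u (j + 1)) x)
    (hmin : ∀ j, ∀ v : B,
      ‖u (j + 1)‖ + lam (j + 1) * (eLpNorm (r (j + 1)) (ENNReal.ofReal p) μ).toReal ^ p
        ≤ ‖v‖ + lam (j + 1)
            * (eLpNorm (fun x => r j x - T v x) (ENNReal.ofReal p) μ).toReal ^ p)
    (hdual : ∀ j : ℕ, 1 ≤ j →
      (eLpNorm (r j) (ENNReal.ofReal p) μ).toReal ^ (p - 1) ≤ β / (p * lam j)) :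
    CauchySeq (fun k => ∑ j ∈ range k, u (j + 1)) ∧
    ∀ x : B, Tendsto (fun k => ∑ j ∈ range k, u (j + 1)) atTop (nhds x) →
      ‖x‖ ≤ (β * 2 ^ p / p) * (eLpNorm f (ENNReal.ofReal p) μ).toReal :=
  stmt_7_general μ p hp β hβ T f hfne lam hlam u r hr0 hmin hdual
end
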